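/- arXiv:1306.0406 — 2 statements merged into one kernel-verified Lean document; each statement's English description precedes it below -/
import Mathlib

section
/- Let x₁ ≤ x₂ ≤ ... ≤ xₙ be strings in non-decreasing lexicographic order. Then for all indices p < q, lcp(x_p, x_q) = min { lcp(x_k, x_{k+1}) : p ≤ k < q }. -/
/-- Length of the longest common prefix of two strings (lists). -/
def lcp {α : Type*} [DecidableEq α] : List α → List α → ℕ
  | a :: x, b :: y => if a = b then lcp x y + 1 else 0
  | _, _ => 0

/-- Non-strict lexicographic order on strings. -/
def lexLe {α : Type*} [LT α] (x y : List α) : Prop :=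
  List.Lex (· < ·) x y ∨ x = y

/-!
The key fact is that `lcp x z = min (lcp x y) (lcp y z)` whenever `x ≤ y ≤ z`: compare the
first letters `a ≤ b ≤ c`; if `a ≠ c` then `a < b` or `b < c` and both sides vanish, otherwise
`a = b = c` and one recurses on the tails. Along a sorted sequence the theorem then follows by
induction on `q`, splitting off the last adjacent pair.
-/

theorem Finset.inf'_Ico_succ_right {β : Type*} [SemilatticeInf β] (f : ℕ → β) {a b : ℕ}
    (hab : a < b) :
    (Ico a (b + 1)).inf' (nonempty_Ico.2 (Nat.lt_succ_of_lt hab)) f =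
      (Ico a b).inf' (nonempty_Ico.2 hab) f ⊓ f b := by
  simp only [Nat.Ico_succ_right_eq_insert_Ico hab.le]
  exact (inf'_insert (nonempty_Ico.2 hab) f).trans (inf_comm _ _)

section lexLe

variable {α : Type*}

theorem lexLe_iff_le [LinearOrder α] {x y : List α} : lexLe x y ↔ x ≤ y := by
  rw [le_iff_lt_or_eq]
  rfl

theorem not_lexLe_cons_nil [LT α] (a : α) (x : List α) : ¬ lexLe (a :: x) [] := by
  simp [lexLe]

theorem lexLe_cons_cons_iff [LT α] {a b : α} {x y : List α} :
    lexLe (a :: x) (b :: y) ↔ a < b ∨ a = b ∧ lexLe x y := by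
  simp only [lexLe, List.cons_lex_cons_iff, List.cons.injEq]
  tauto

end lexLe

theorem lcp_eq_min_of_lexLe {α : Type*} [LinearOrder α] :
    ∀ {x y z : List α}, lexLe x y → lexLe y z → lcp x z = min (lcp x y) (lcp y z)
  | [], _, _, _, _ => by simp [lcp]
  | _ :: _, [], _, hxy, _ => absurd hxy (not_lexLe_cons_nil _ _)
  | _ :: _, _ :: _, [], _, hyz => absurd hyz (not_lexLe_cons_nil _ _)
  | a :: x, b :: y, c :: z, hxy, hyz => by
    rcases lexLe_cons_cons_iff.1 hxy with hab | ⟨rfl, hxy'⟩ <;>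
      rcases lexLe_cons_cons_iff.1 hyz with hbc | ⟨rfl, hyz'⟩
    · simp [lcp, hab.ne, (hab.trans hbc).ne]
    · simp [lcp, hab.ne]
    · simp [lcp, hbc.ne]
    · simp [lcp, lcp_eq_min_of_lexLe hxy' hyz', Nat.add_min_add_right]

/-- For strings in non-decreasing lexicographic order,
`lcp(x_p, x_q) = min { lcp(x_k, x_{k+1}) : p ≤ k < q }`. -/
theorem lcp_eq_min_adjacent {α : Type*} [LinearOrder α] (x : ℕ → List α)
    (hsorted : ∀ k, lexLe (x k) (x (k + 1))) :
    ∀ p q (hpq : p < q),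
      lcp (x p) (x q) =
        (Finset.Ico p q).inf' (Finset.nonempty_Ico.mpr hpq)
          (fun k => lcp (x k) (x (k + 1))) := by
  have hmono : Monotone x := monotone_nat_of_le_succ fun k => lexLe_iff_le.1 (hsorted k)
  intro p q hpq
  induction q, hpq using Nat.le_induction with
  | base => simp only [Nat.Ico_succ_singleton, Finset.inf'_singleton]
  | succ n hpn ih =>
    rw [Finset.inf'_Ico_succ_right _ hpn, ← ih,
      lcp_eq_min_of_lexLe (lexLe_iff_le.2 (hmono (Nat.le_of_succ_le hpn))) (hsorted n)]
end

section
/- In a Cartesian tree built on a sequence e₁,...,e_m (the root stores the minimum of the sequence, with its left and right subtrees being Cartesian trees of the prefix before and the suffix after the minimum, respectively), for any indices i ≤ j, the element stored at the lowest common ancestor of the nodes for positions i and j equals min{e_i, e_{i+1}, ..., e_j}. -/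
/-- Binary trees with values at internal nodes. -/
inductive CTree (α : Type*) where
  | nil : CTree α
  | node : CTree α → α → CTree α → CTree α

namespace CTree

/-- Number of nodes of a tree. -/
def size {α : Type*} : CTree α → ℕ
  | nil => 0
  | node l _ r => l.size + 1 + r.size

/-- Build the Cartesian tree of a list (with fuel for termination): the root
stores the (leftmost) minimum of the sequence, its left and right subtrees being
the Cartesian trees of the prefix before and of the suffix after that minimum. -/
def cartAux {α : Type*} [LinearOrder α] : ℕ → List α → CTree α
  | 0, _ => nil
  | _ + 1, [] => nil
  | n + 1, a :: t =>
    let l := a :: t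
    let m := l.foldr min a
    let i := l.idxOf m
    node (cartAux n (l.take i)) m (cartAux n (l.drop (i + 1)))

/-- The Cartesian tree of a list. -/
def cart {α : Type*} [LinearOrder α] (l : List α) : CTree α :=
  cartAux l.length l

/-- The value stored at the lowest common ancestor of the nodes corresponding to
(0-based) positions i ≤ j of the underlying sequence: descend while both
positions are on the same side of the root. -/
def lcaVal {α : Type*} [Inhabited α] : CTree α → ℕ → ℕ → α
  | nil, _, _ => default
  | node l v r, i, j =>
    if j < l.size then lcaVal l i j
    else if l.size < i then lcaVal r (i - l.size - 1) (j - l.size - 1)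
    else v

end CTree

/-! The root of a Cartesian tree holds the minimum of the whole list, at position `k`. If the
window `[i, j]` ends before `k` (starts after `k`), the lowest common ancestor lies in the left
(right) subtree, which is the Cartesian tree of the prefix (suffix), and the window is unchanged;
otherwise the window contains position `k`, so its minimum is the global one, stored at the root. -/

namespace List

lemma getElem_mem_drop_take {α : Type*} (l : List α) {i j k : ℕ} (hik : i ≤ k) (hkj : k ≤ j)
    (hk : k < l.length) : l[k] ∈ (l.drop i).take (j + 1 - i) := by
  have hlen : k - i < ((l.drop i).take (j + 1 - i)).length := by
    simp only [length_take, length_drop]; omega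
  have hget : ((l.drop i).take (j + 1 - i))[k - i] = l[k] := by
    simp only [getElem_take, getElem_drop, Nat.add_sub_cancel' hik]
  exact hget ▸ getElem_mem hlen

variable {α : Type*} [LinearOrder α]

lemma minimum_eq_coe_of_subset {l₁ l₂ : List α} {m : α} (h : l₁ ⊆ l₂) (hm : m ∈ l₁)
    (h₂ : l₂.minimum = m) : l₁.minimum = m :=
  minimum_eq_coe_iff.2 ⟨hm, fun _ ha => minimum_le_of_mem (h ha) h₂⟩

lemma coe_foldr_min (a : α) (l : List α) :
    ((l.foldr min a : α) : WithTop α) = min ↑a l.minimum := by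
  induction l with
  | nil => simp
  | cons b t ih => rw [foldr_cons, WithTop.coe_min, ih, minimum_cons, min_left_comm]

end List

namespace CTree

open List

variable {α : Type*} [LinearOrder α]

lemma cartAux_succ_eq_node {l : List α} (hl : l ≠ []) (n : ℕ) :
    ∃ m : α, l.minimum = m ∧ cartAux (n + 1) l =
      node (cartAux n (l.take (l.idxOf m))) m (cartAux n (l.drop (l.idxOf m + 1))) := by
  obtain ⟨a, t, rfl⟩ := exists_cons_of_ne_nil hl
  refine ⟨(a :: t).foldr min a, ?_, rfl⟩
  rw [coe_foldr_min, min_eq_right (minimum_le_of_mem' mem_cons_self)]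

lemma size_cartAux {n : ℕ} {l : List α} (hl : l.length ≤ n) :
    (cartAux n l).size = l.length := by
  induction n generalizing l with
  | zero => simp [length_eq_zero_iff.1 (Nat.le_zero.1 hl), cartAux, size]
  | succ n ih =>
    rcases eq_or_ne l [] with rfl | hne
    · simp [cartAux, size]
    obtain ⟨m, hmin, hnode⟩ := cartAux_succ_eq_node hne n
    have hk : l.idxOf m < l.length := idxOf_lt_length_iff.2 (minimum_mem hmin)
    rw [hnode, size, ih (by simp only [length_take]; omega),
      ih (by simp only [length_drop]; omega), length_take, length_drop]
    omega

lemma minimum_drop_take_eq_lcaVal_cartAux [Inhabited α] {n : ℕ} {l : List α}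
    (hl : l.length ≤ n) {i j : ℕ} (hij : i ≤ j) (hj : j < l.length) :
    ((l.drop i).take (j + 1 - i)).minimum = (cartAux n l).lcaVal i j := by
  induction n generalizing l i j with
  | zero => omega
  | succ n ih =>
    obtain ⟨m, hmin, hnode⟩ :=
      cartAux_succ_eq_node (ne_nil_of_length_pos (Nat.zero_lt_of_lt hj)) n
    set k := l.idxOf m
    have hk : k < l.length := idxOf_lt_length_iff.2 (minimum_mem hmin)
    have hsize : (cartAux n (l.take k)).size = k := by
      rw [size_cartAux (by simp only [length_take]; omega), length_take, min_eq_left hk.le]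
    rw [hnode, lcaVal, hsize]
    split_ifs with hjk hki
    · rw [← ih (by simp only [length_take]; omega) hij (by simp only [length_take]; omega),
        drop_take, take_take, min_eq_left (by omega : j + 1 - i ≤ k - i)]
    · rw [← ih (by simp only [length_drop]; omega) (by omega : i - k - 1 ≤ j - k - 1)
        (by simp only [length_drop]; omega), drop_drop, show k + 1 + (i - k - 1) = i by omega,
        show j - k - 1 + 1 - (i - k - 1) = j + 1 - i by omega]
    · refine minimum_eq_coe_of_subset (fun _ h => mem_of_mem_drop (mem_of_mem_take h)) ?_ hmin
      simpa only [k, getElem_idxOf] using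
        l.getElem_mem_drop_take (by omega : i ≤ k) (by omega : k ≤ j) hk

end CTree

/-- In a Cartesian tree built on a sequence e₀,...,e_{m-1}, for any positions
i ≤ j < m, the element stored at the lowest common ancestor of the nodes for
positions i and j equals min{e_i, ..., e_j}. -/
theorem cartesian_lca_eq_range_min {α : Type*} [LinearOrder α] [Inhabited α]
    (e : List α) (i j : ℕ) (hij : i ≤ j) (hj : j < e.length) :
    ((e.drop i).take (j + 1 - i)).minimum =
      ((CTree.cart e).lcaVal i j : α) :=
  CTree.minimum_drop_take_eq_lcaVal_cartAux le_rfl hij hj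
end
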